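/- Let a ≠ 0 and consider the 2×2 second-order operators D₁ = ∂²[[-ax, a²x²-1],[-1,ax]] + ∂[[-2a, 2a²x+4x],[0,0]] + [[0, 2+4/a²],[4/a², 0]] and D₅ = ∂²I + ∂[[-2x, 2a],[0,-2x]] + [[-2-4/a², 0],[0, -4/a²]]. Then the operators D₃ := (1/4)(D₅² - D₁²) - (1/2)D₅ and D₂ := -D₃ - D₅ and D₄ := (i/2)(D₁D₅ - D₅D₁) are all second-order operators; explicitly, D₄ = ∂²i[[-ax, a²x²+1],[-1, ax]] + ∂i[[-2a-4/a, 2a²x+4x],[0, 4/a]] + i[[0, 2+4/a²],[-4/a², 0]]. -/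

import Mathlib

open Matrix Complex

/-- Entrywise derivative of a complex-matrix-valued function of a real variable. -/
noncomputable def md (P : ℝ → Matrix (Fin 2) (Fin 2) ℂ) : ℝ → Matrix (Fin 2) (Fin 2) ℂ :=
  fun x => Matrix.of fun i j => deriv (fun t => P t i j) x

/-- Right action of `D₁ = ∂²[[-ax, a²x²-1],[-1,ax]] + ∂[[-2a, 2a²x+4x],[0,0]]
  + [[0, 2+4/a²],[4/a², 0]]`. -/
noncomputable def actD1 (a : ℝ) (P : ℝ → Matrix (Fin 2) (Fin 2) ℂ) :
    ℝ → Matrix (Fin 2) (Fin 2) ℂ :=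
  fun x => md (md P) x * !![-(a : ℂ) * x, (a : ℂ)^2 * x^2 - 1; -1, (a : ℂ) * x] +
    md P x * !![-2 * (a : ℂ), 2 * (a : ℂ)^2 * x + 4 * x; 0, 0] +
    P x * !![0, 2 + 4/(a : ℂ)^2; 4/(a : ℂ)^2, 0]

/-- Right action of `D₅ = ∂²I + ∂[[-2x, 2a],[0,-2x]] + [[-2-4/a², 0],[0, -4/a²]]`. -/
noncomputable def actD5 (a : ℝ) (P : ℝ → Matrix (Fin 2) (Fin 2) ℂ) :
    ℝ → Matrix (Fin 2) (Fin 2) ℂ :=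
  fun x => md (md P) x + md P x * !![-2 * (x : ℂ), 2 * (a : ℂ); 0, -2 * (x : ℂ)] +
    P x * !![-2 - 4/(a : ℂ)^2, 0; 0, -4/(a : ℂ)^2]

/-- Smoothness of all matrix entries. -/
def Sm (P : ℝ → Matrix (Fin 2) (Fin 2) ℂ) : Prop :=
  ∀ i j, ContDiff ℝ (⊤ : ℕ∞) fun t => P t i j

/-! ### Auxiliary machinery -/

@[fun_prop] lemma contDiff_ofReal' : ContDiff ℝ (⊤ : ℕ∞) (Complex.ofReal) := Complex.ofRealCLM.contDiff

lemma hdx (x : ℝ) : HasDerivAt (fun t : ℝ => (t : ℂ)) 1 x := by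
  simpa using (hasDerivAt_id x).ofReal_comp

lemma deriv_cmul (c : ℂ) (x : ℝ) : deriv (fun t : ℝ => c * t) x = c := by
  simpa using ((hdx x).const_mul c).deriv

lemma deriv_sq (c : ℂ) (x : ℝ) : deriv (fun t : ℝ => c * (t : ℂ)^2 - 1) x = 2*c*x := by
  have h2 : HasDerivAt (fun t : ℝ => (t : ℂ)^2) (2*(x : ℂ)) x := by
    have h := (hdx x).fun_mul (hdx x)
    simp only [one_mul, mul_one] at h
    have e : (fun t : ℝ => (t : ℂ)^2) = fun t : ℝ => (t : ℂ)*(t : ℂ) := by funext t; ring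
    rw [e]; exact h.congr_deriv (by ring)
  have h := (h2.const_mul c).sub_const 1
  rw [h.deriv]; ring

lemma deriv_two_lin (c d : ℂ) (x : ℝ) : deriv (fun t : ℝ => c * t + d * t) x = c + d := by
  have h := ((hdx x).const_mul c).fun_add ((hdx x).const_mul d)
  simpa using h.deriv

lemma sm_deriv {f : ℝ → ℂ} (h : ContDiff ℝ (⊤ : ℕ∞) f) : ContDiff ℝ (⊤ : ℕ∞) (deriv f) :=
  (contDiff_infty_iff_deriv.1 h).2

lemma Sm.md {P} (h : Sm P) : Sm (md P) := fun i j => sm_deriv (h i j)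

lemma Sm.diffAt {P} (h : Sm P) (i j : Fin 2) (x : ℝ) :
    DifferentiableAt ℝ (fun t => P t i j) x :=
  ((h i j).differentiable (by simp)).differentiableAt

lemma Sm.add {F G} (hF : Sm F) (hG : Sm G) : Sm (fun t => F t + G t) := by
  intro i j
  have e : (fun t => (F t + G t) i j) = fun t => F t i j + G t i j := by
    funext t; simp
  rw [e]; exact (hF i j).add (hG i j)

lemma Sm.mul {F G} (hF : Sm F) (hG : Sm G) : Sm (fun t => F t * G t) := by
  intro i j
  have e : (fun t => (F t * G t) i j) = fun t => F t i 0 * G t 0 j + F t i 1 * G t 1 j := by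
    funext t; simp [Matrix.mul_apply, Fin.sum_univ_two]
  rw [e]; exact ((hF i 0).mul (hG 0 j)).add ((hF i 1).mul (hG 1 j))

lemma md_add {F G} (hF : Sm F) (hG : Sm G) :
    md (fun t => F t + G t) = fun x => md F x + md G x := by
  funext x; ext i j
  simp only [md, Matrix.of_apply, Matrix.add_apply]
  rw [deriv_fun_add (hF.diffAt i j x) (hG.diffAt i j x)]

lemma md_mul {F G} (hF : Sm F) (hG : Sm G) :
    md (fun t => F t * G t) = fun x => md F x * G x + F x * md G x := by
  funext x; ext i j
  simp only [md, Matrix.of_apply, Matrix.add_apply, Matrix.mul_apply, Fin.sum_univ_two]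
  rw [deriv_fun_add ((hF.diffAt i 0 x).fun_mul (hG.diffAt 0 j x)) ((hF.diffAt i 1 x).fun_mul (hG.diffAt 1 j x)),
    deriv_fun_mul (hF.diffAt i 0 x) (hG.diffAt 0 j x), deriv_fun_mul (hF.diffAt i 1 x) (hG.diffAt 1 j x)]
  ring

lemma md_const (M : Matrix (Fin 2) (Fin 2) ℂ) :
    md (fun _ : ℝ => M) = fun _ => 0 := by
  funext x; ext i j; simp [md]

lemma md_act {A B C P : ℝ → Matrix (Fin 2) (Fin 2) ℂ}
    (hA : Sm A) (hB : Sm B) (hC : Sm C) (hP : Sm P) :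
    md (fun t => md (md P) t * A t + md P t * B t + P t * C t)
    = fun x => md (md (md P)) x * A x + md (md P) x * (md A x + B x)
        + md P x * (md B x + C x) + P x * md C x := by
  have h1 := md_add (F := fun t => md (md P) t * A t + md P t * B t) (G := fun t => P t * C t)
    ((hP.md.md.mul hA).add (hP.md.mul hB)) (hP.mul hC)
  have h2 := md_add (F := fun t => md (md P) t * A t) (G := fun t => md P t * B t)
    (hP.md.md.mul hA) (hP.md.mul hB)
  funext x
  simp only [h1, h2, md_mul hP.md.md hA, md_mul hP.md hB, md_mul hP hC]
  noncomm_ring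

lemma md_act4 {A B C D P : ℝ → Matrix (Fin 2) (Fin 2) ℂ}
    (hA : Sm A) (hB : Sm B) (hC : Sm C) (hD : Sm D) (hP : Sm P) :
    md (fun t => md (md (md P)) t * A t + md (md P) t * B t + md P t * C t + P t * D t)
    = fun x => md (md (md (md P))) x * A x + md (md (md P)) x * (md A x + B x)
        + md (md P) x * (md B x + C x) + md P x * (md C x + D x) + P x * md D x := by
  have h1 := md_add
    (F := fun t => md (md (md P)) t * A t + md (md P) t * B t + md P t * C t)
    (G := fun t => P t * D t)
    (((hP.md.md.md.mul hA).add (hP.md.md.mul hB)).add (hP.md.mul hC)) (hP.mul hD)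
  have h2 := md_add (F := fun t => md (md (md P)) t * A t + md (md P) t * B t)
    (G := fun t => md P t * C t) ((hP.md.md.md.mul hA).add (hP.md.md.mul hB)) (hP.md.mul hC)
  have h3 := md_add (F := fun t => md (md (md P)) t * A t) (G := fun t => md (md P) t * B t)
    (hP.md.md.md.mul hA) (hP.md.md.mul hB)
  funext x
  simp only [h1, h2, h3, md_mul hP.md.md.md hA, md_mul hP.md.md hB, md_mul hP.md hC,
    md_mul hP hD]
  noncomm_ring

lemma comp_expand {A B C A' B' C' P : ℝ → Matrix (Fin 2) (Fin 2) ℂ}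
    (hA' : Sm A') (hB' : Sm B') (hC' : Sm C') (hP : Sm P) (x : ℝ) :
    md (md (fun t => md (md P) t * A' t + md P t * B' t + P t * C' t)) x * A x
      + md (fun t => md (md P) t * A' t + md P t * B' t + P t * C' t) x * B x
      + (md (md P) x * A' x + md P x * B' x + P x * C' x) * C x
    = md (md (md (md P))) x * (A' x * A x)
      + md (md (md P)) x * ((md A' x + md A' x + B' x) * A x + A' x * B x)
      + md (md P) x * ((md (md A') x + md B' x + md B' x + C' x) * A x
          + (md A' x + B' x) * B x + A' x * C x)
      + md P x * ((md (md B') x + md C' x + md C' x) * A x + (md B' x + C' x) * B x + B' x * C x)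
      + P x * (md (md C') x * A x + md C' x * B x + C' x * C x) := by
  simp only [md_act hA' hB' hC' hP,
    md_act4 hA' (hA'.md.add hB') (hB'.md.add hC') hC'.md hP,
    md_add hA'.md hB', md_add hB'.md hC']
  noncomm_ring

/-! ### The concrete coefficient matrices -/

noncomputable def mA1 (a : ℝ) : ℝ → Matrix (Fin 2) (Fin 2) ℂ :=
  fun x => !![-(a : ℂ) * x, (a : ℂ)^2 * x^2 - 1; -1, (a : ℂ) * x]
noncomputable def mB1 (a : ℝ) : ℝ → Matrix (Fin 2) (Fin 2) ℂ :=
  fun x => !![-2 * (a : ℂ), 2 * (a : ℂ)^2 * x + 4 * x; 0, 0]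
noncomputable def mC1 (a : ℝ) : ℝ → Matrix (Fin 2) (Fin 2) ℂ :=
  fun _ => !![0, 2 + 4/(a : ℂ)^2; 4/(a : ℂ)^2, 0]
noncomputable def mA5 : ℝ → Matrix (Fin 2) (Fin 2) ℂ := fun _ => 1
noncomputable def mB5 (a : ℝ) : ℝ → Matrix (Fin 2) (Fin 2) ℂ :=
  fun x => !![-2 * (x : ℂ), 2 * (a : ℂ); 0, -2 * (x : ℂ)]
noncomputable def mC5 (a : ℝ) : ℝ → Matrix (Fin 2) (Fin 2) ℂ :=
  fun _ => !![-2 - 4/(a : ℂ)^2, 0; 0, -4/(a : ℂ)^2]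

lemma actD1_eq (a : ℝ) (P : ℝ → Matrix (Fin 2) (Fin 2) ℂ) :
    actD1 a P = fun x => md (md P) x * mA1 a x + md P x * mB1 a x + P x * mC1 a x := rfl

lemma actD5_eq (a : ℝ) (P : ℝ → Matrix (Fin 2) (Fin 2) ℂ) :
    actD5 a P = fun x => md (md P) x * mA5 x + md P x * mB5 a x + P x * mC5 a x := by
  funext x; simp [actD5, mA5, mB5, mC5]

lemma sm_mA1 (a : ℝ) : Sm (mA1 a) := by
  intro i j; fin_cases i <;> fin_cases j <;> simp [mA1] <;> fun_prop
lemma sm_mB1 (a : ℝ) : Sm (mB1 a) := by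
  intro i j; fin_cases i <;> fin_cases j <;> simp [mB1] <;> fun_prop
lemma sm_mC1 (a : ℝ) : Sm (mC1 a) := by
  intro i j; fin_cases i <;> fin_cases j <;> simp [mC1] <;> fun_prop
lemma sm_mA5 : Sm mA5 := by
  intro i j; fin_cases i <;> fin_cases j <;> simp [mA5, Matrix.one_apply] <;> fun_prop
lemma sm_mB5 (a : ℝ) : Sm (mB5 a) := by
  intro i j; fin_cases i <;> fin_cases j <;> simp [mB5] <;> fun_prop
lemma sm_mC5 (a : ℝ) : Sm (mC5 a) := by
  intro i j; fin_cases i <;> fin_cases j <;> simp [mC5] <;> fun_prop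

lemma md_mA1 (a : ℝ) : md (mA1 a) = fun x : ℝ => !![-(a : ℂ), 2 * (a : ℂ)^2 * (x:ℂ); 0, (a : ℂ)] := by
  funext x; ext i j
  fin_cases i <;> fin_cases j <;>
    simp [md, mA1, deriv_cmul, deriv_sq, deriv_two_lin] <;> ring

lemma md_mA1' (a : ℝ) :
    md (fun x : ℝ => !![-(a : ℂ), 2 * (a : ℂ)^2 * (x:ℂ); 0, (a : ℂ)]) = fun _ => !![0, 2 * (a : ℂ)^2; 0, 0] := by
  funext x; ext i j
  fin_cases i <;> fin_cases j <;>
    simp [md, deriv_cmul] <;> ring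

lemma md_mB1 (a : ℝ) : md (mB1 a) = fun _ => !![0, 2 * (a : ℂ)^2 + 4; 0, 0] := by
  funext x; ext i j
  fin_cases i <;> fin_cases j <;>
    simp [md, mB1, deriv_two_lin] <;> ring

lemma md_mC1 (a : ℝ) : md (mC1 a) = fun _ => 0 := md_const _

lemma md_mA5 : md mA5 = fun _ => 0 := md_const _

lemma md_mB5 (a : ℝ) : md (mB5 a) = fun _ => !![-2, 0; 0, -2] := by
  funext x; ext i j
  fin_cases i <;> fin_cases j <;>
    simp [md, mB5, deriv_cmul] <;> ring

lemma md_mC5 (a : ℝ) : md (mC5 a) = fun _ => 0 := md_const _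


lemma add_fin_two' (a b c d e f g h : ℂ) :
    !![a,b;c,d] + !![e,f;g,h] = !![a+e, b+f; c+g, d+h] := by
  ext i j; fin_cases i <;> fin_cases j <;> simp

set_option maxHeartbeats 1000000

lemma L55k4 (a : ℝ) (ha : a ≠ 0) (x : ℝ) :
    mA5 x * mA5 x
    = !![1, 0;
      0, 1] := by
  have ha' : (a : ℂ) ≠ 0 := Complex.ofReal_ne_zero.mpr ha
  simp only [md_mA1 a, md_mA1' a, md_mB1 a, md_mC1 a, md_mA5, md_mB5 a, md_mC5 a, md_const,
    mA1, mB1, mC1, mA5, mB5, mC5, Matrix.one_fin_two, add_fin_two', Matrix.mul_fin_two,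
    zero_add, add_zero]
  ext i j
  fin_cases i <;> fin_cases j <;>
  · simp
    try field_simp
    try ring

lemma L55k3 (a : ℝ) (ha : a ≠ 0) (x : ℝ) :
    (md mA5 x + md mA5 x + mB5 a x) * mA5 x + mA5 x * mB5 a x
    = !![-4*(x:ℂ), 4*(a:ℂ);
      0, -4*(x:ℂ)] := by
  have ha' : (a : ℂ) ≠ 0 := Complex.ofReal_ne_zero.mpr ha
  simp only [md_mA1 a, md_mA1' a, md_mB1 a, md_mC1 a, md_mA5, md_mB5 a, md_mC5 a, md_const,
    mA1, mB1, mC1, mA5, mB5, mC5, Matrix.one_fin_two, add_fin_two', Matrix.mul_fin_two,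
    zero_add, add_zero]
  ext i j
  fin_cases i <;> fin_cases j <;>
  · simp
    try field_simp
    try ring

lemma L55k2 (a : ℝ) (ha : a ≠ 0) (x : ℝ) :
    (md (md mA5) x + md (mB5 a) x + md (mB5 a) x + mC5 a x) * mA5 x
      + (md mA5 x + mB5 a x) * mB5 a x + mA5 x * mC5 a x
    = !![-8/(a:ℂ)^2 + -8 + 4*(x:ℂ)^2, -8*(a:ℂ)*(x:ℂ);
      0, -8/(a:ℂ)^2 + -4 + 4*(x:ℂ)^2] := by
  have ha' : (a : ℂ) ≠ 0 := Complex.ofReal_ne_zero.mpr ha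
  simp only [md_mA1 a, md_mA1' a, md_mB1 a, md_mC1 a, md_mA5, md_mB5 a, md_mC5 a, md_const,
    mA1, mB1, mC1, mA5, mB5, mC5, Matrix.one_fin_two, add_fin_two', Matrix.mul_fin_two,
    zero_add, add_zero]
  ext i j
  fin_cases i <;> fin_cases j <;>
  · simp
    try field_simp
    try ring

lemma L55k1 (a : ℝ) (ha : a ≠ 0) (x : ℝ) :
    (md (md (mB5 a)) x + md (mC5 a) x + md (mC5 a) x) * mA5 x + (md (mB5 a) x + mC5 a x) * mB5 a x + mB5 a x * mC5 a x
    = !![16/(a:ℂ)^2*(x:ℂ) + 12*(x:ℂ), -16/(a:ℂ) + -8*(a:ℂ);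
      0, 16/(a:ℂ)^2*(x:ℂ) + 4*(x:ℂ)] := by
  have ha' : (a : ℂ) ≠ 0 := Complex.ofReal_ne_zero.mpr ha
  simp only [md_mA1 a, md_mA1' a, md_mB1 a, md_mC1 a, md_mA5, md_mB5 a, md_mC5 a, md_const,
    mA1, mB1, mC1, mA5, mB5, mC5, Matrix.one_fin_two, add_fin_two', Matrix.mul_fin_two,
    zero_add, add_zero]
  ext i j
  fin_cases i <;> fin_cases j <;>
  · simp
    try field_simp
    try ring

lemma L55k0 (a : ℝ) (ha : a ≠ 0) (x : ℝ) :
    md (md (mC5 a)) x * mA5 x + md (mC5 a) x * mB5 a x + mC5 a x * mC5 a x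
    = !![16/(a:ℂ)^4 + 16/(a:ℂ)^2 + 4, 0;
      0, 16/(a:ℂ)^4] := by
  have ha' : (a : ℂ) ≠ 0 := Complex.ofReal_ne_zero.mpr ha
  simp only [md_mA1 a, md_mA1' a, md_mB1 a, md_mC1 a, md_mA5, md_mB5 a, md_mC5 a, md_const,
    mA1, mB1, mC1, mA5, mB5, mC5, Matrix.one_fin_two, add_fin_two', Matrix.mul_fin_two,
    zero_add, add_zero]
  ext i j
  fin_cases i <;> fin_cases j <;>
  · simp
    try field_simp
    try ring

lemma L11k4 (a : ℝ) (ha : a ≠ 0) (x : ℝ) :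
    mA1 a x * mA1 a x
    = !![1, 0;
      0, 1] := by
  have ha' : (a : ℂ) ≠ 0 := Complex.ofReal_ne_zero.mpr ha
  simp only [md_mA1 a, md_mA1' a, md_mB1 a, md_mC1 a, md_mA5, md_mB5 a, md_mC5 a, md_const,
    mA1, mB1, mC1, mA5, mB5, mC5, Matrix.one_fin_two, add_fin_two', Matrix.mul_fin_two,
    zero_add, add_zero]
  ext i j
  fin_cases i <;> fin_cases j <;>
  · simp
    try field_simp
    try ring

lemma L11k3 (a : ℝ) (ha : a ≠ 0) (x : ℝ) :
    (md (mA1 a) x + md (mA1 a) x + mB1 a x) * mA1 a x + mA1 a x * mB1 a x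
    = !![-4*(x:ℂ), 4*(a:ℂ);
      0, -4*(x:ℂ)] := by
  have ha' : (a : ℂ) ≠ 0 := Complex.ofReal_ne_zero.mpr ha
  simp only [md_mA1 a, md_mA1' a, md_mB1 a, md_mC1 a, md_mA5, md_mB5 a, md_mC5 a, md_const,
    mA1, mB1, mC1, mA5, mB5, mC5, Matrix.one_fin_two, add_fin_two', Matrix.mul_fin_two,
    zero_add, add_zero]
  ext i j
  fin_cases i <;> fin_cases j <;>
  · simp
    try field_simp
    try ring

lemma L11k2 (a : ℝ) (ha : a ≠ 0) (x : ℝ) :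
    (md (md (mA1 a)) x + md (mB1 a) x + md (mB1 a) x + mC1 a x) * mA1 a x
      + (md (mA1 a) x + mB1 a x) * mB1 a x + mA1 a x * mC1 a x
    = !![-8/(a:ℂ)^2 + -10 + 4*(x:ℂ)^2, -4*(a:ℂ)*(x:ℂ);
      0, -8/(a:ℂ)^2 + -2 + 4*(x:ℂ)^2] := by
  have ha' : (a : ℂ) ≠ 0 := Complex.ofReal_ne_zero.mpr ha
  simp only [md_mA1 a, md_mA1' a, md_mB1 a, md_mC1 a, md_mA5, md_mB5 a, md_mC5 a, md_const,
    mA1, mB1, mC1, mA5, mB5, mC5, Matrix.one_fin_two, add_fin_two', Matrix.mul_fin_two,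
    zero_add, add_zero]
  ext i j
  fin_cases i <;> fin_cases j <;>
  · simp
    try field_simp
    try ring

lemma L11k1 (a : ℝ) (ha : a ≠ 0) (x : ℝ) :
    (md (md (mB1 a)) x + md (mC1 a) x + md (mC1 a) x) * mA1 a x + (md (mB1 a) x + mC1 a x) * mB1 a x + mB1 a x * mC1 a x
    = !![16/(a:ℂ)^2*(x:ℂ) + 8*(x:ℂ), -8/(a:ℂ) + -4*(a:ℂ);
      -8/(a:ℂ), 16/(a:ℂ)^2*(x:ℂ) + 8*(x:ℂ)] := by
  have ha' : (a : ℂ) ≠ 0 := Complex.ofReal_ne_zero.mpr ha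
  simp only [md_mA1 a, md_mA1' a, md_mB1 a, md_mC1 a, md_mA5, md_mB5 a, md_mC5 a, md_const,
    mA1, mB1, mC1, mA5, mB5, mC5, Matrix.one_fin_two, add_fin_two', Matrix.mul_fin_two,
    zero_add, add_zero]
  ext i j
  fin_cases i <;> fin_cases j <;>
  · simp
    try field_simp
    try ring

lemma L11k0 (a : ℝ) (ha : a ≠ 0) (x : ℝ) :
    md (md (mC1 a)) x * mA1 a x + md (mC1 a) x * mB1 a x + mC1 a x * mC1 a x
    = !![16/(a:ℂ)^4 + 8/(a:ℂ)^2, 0;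
      0, 16/(a:ℂ)^4 + 8/(a:ℂ)^2] := by
  have ha' : (a : ℂ) ≠ 0 := Complex.ofReal_ne_zero.mpr ha
  simp only [md_mA1 a, md_mA1' a, md_mB1 a, md_mC1 a, md_mA5, md_mB5 a, md_mC5 a, md_const,
    mA1, mB1, mC1, mA5, mB5, mC5, Matrix.one_fin_two, add_fin_two', Matrix.mul_fin_two,
    zero_add, add_zero]
  ext i j
  fin_cases i <;> fin_cases j <;>
  · simp
    try field_simp
    try ring

lemma L51k4 (a : ℝ) (ha : a ≠ 0) (x : ℝ) :
    mA1 a x * mA5 x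
    = !![-1*(a:ℂ)*(x:ℂ), -1 + 1*(a:ℂ)^2*(x:ℂ)^2;
      -1, 1*(a:ℂ)*(x:ℂ)] := by
  have ha' : (a : ℂ) ≠ 0 := Complex.ofReal_ne_zero.mpr ha
  simp only [md_mA1 a, md_mA1' a, md_mB1 a, md_mC1 a, md_mA5, md_mB5 a, md_mC5 a, md_const,
    mA1, mB1, mC1, mA5, mB5, mC5, Matrix.one_fin_two, add_fin_two', Matrix.mul_fin_two,
    zero_add, add_zero]
  ext i j
  fin_cases i <;> fin_cases j <;>
  · simp
    try field_simp
    try ring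

lemma L51k3 (a : ℝ) (ha : a ≠ 0) (x : ℝ) :
    (md (mA1 a) x + md (mA1 a) x + mB1 a x) * mA5 x + mA1 a x * mB5 a x
    = !![-4*(a:ℂ) + 2*(a:ℂ)*(x:ℂ)^2, 6*(x:ℂ) + 4*(a:ℂ)^2*(x:ℂ) + -2*(a:ℂ)^2*(x:ℂ)^3;
      2*(x:ℂ), -2*(a:ℂ)*(x:ℂ)^2] := by
  have ha' : (a : ℂ) ≠ 0 := Complex.ofReal_ne_zero.mpr ha
  simp only [md_mA1 a, md_mA1' a, md_mB1 a, md_mC1 a, md_mA5, md_mB5 a, md_mC5 a, md_const,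
    mA1, mB1, mC1, mA5, mB5, mC5, Matrix.one_fin_two, add_fin_two', Matrix.mul_fin_two,
    zero_add, add_zero]
  ext i j
  fin_cases i <;> fin_cases j <;>
  · simp
    try field_simp
    try ring

lemma L51k2 (a : ℝ) (ha : a ≠ 0) (x : ℝ) :
    (md (md (mA1 a)) x + md (mB1 a) x + md (mB1 a) x + mC1 a x) * mA5 x
      + (md (mA1 a) x + mB1 a x) * mB5 a x + mA1 a x * mC5 a x
    = !![4/(a:ℂ)*(x:ℂ) + 8*(a:ℂ)*(x:ℂ), 8/(a:ℂ)^2 + 10 + -12*(x:ℂ)^2 + -8*(a:ℂ)^2*(x:ℂ)^2;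
      8/(a:ℂ)^2 + 2, -4/(a:ℂ)*(x:ℂ) + -2*(a:ℂ)*(x:ℂ)] := by
  have ha' : (a : ℂ) ≠ 0 := Complex.ofReal_ne_zero.mpr ha
  simp only [md_mA1 a, md_mA1' a, md_mB1 a, md_mC1 a, md_mA5, md_mB5 a, md_mC5 a, md_const,
    mA1, mB1, mC1, mA5, mB5, mC5, Matrix.one_fin_two, add_fin_two', Matrix.mul_fin_two,
    zero_add, add_zero]
  ext i j
  fin_cases i <;> fin_cases j <;>
  · simp
    try field_simp
    try ring

lemma L51k1 (a : ℝ) (ha : a ≠ 0) (x : ℝ) :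
    (md (md (mB1 a)) x + md (mC1 a) x + md (mC1 a) x) * mA5 x + (md (mB1 a) x + mC1 a x) * mB5 a x + mB1 a x * mC5 a x
    = !![8/(a:ℂ) + 4*(a:ℂ), -24/(a:ℂ)^2*(x:ℂ) + -20*(x:ℂ) + -4*(a:ℂ)^2*(x:ℂ);
      -8/(a:ℂ)^2*(x:ℂ), 8/(a:ℂ)] := by
  have ha' : (a : ℂ) ≠ 0 := Complex.ofReal_ne_zero.mpr ha
  simp only [md_mA1 a, md_mA1' a, md_mB1 a, md_mC1 a, md_mA5, md_mB5 a, md_mC5 a, md_const,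
    mA1, mB1, mC1, mA5, mB5, mC5, Matrix.one_fin_two, add_fin_two', Matrix.mul_fin_two,
    zero_add, add_zero]
  ext i j
  fin_cases i <;> fin_cases j <;>
  · simp
    try field_simp
    try ring

lemma L51k0 (a : ℝ) (ha : a ≠ 0) (x : ℝ) :
    md (md (mC1 a)) x * mA5 x + md (mC1 a) x * mB5 a x + mC1 a x * mC5 a x
    = !![0, -16/(a:ℂ)^4 + -8/(a:ℂ)^2;
      -16/(a:ℂ)^4 + -8/(a:ℂ)^2, 0] := by
  have ha' : (a : ℂ) ≠ 0 := Complex.ofReal_ne_zero.mpr ha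
  simp only [md_mA1 a, md_mA1' a, md_mB1 a, md_mC1 a, md_mA5, md_mB5 a, md_mC5 a, md_const,
    mA1, mB1, mC1, mA5, mB5, mC5, Matrix.one_fin_two, add_fin_two', Matrix.mul_fin_two,
    zero_add, add_zero]
  ext i j
  fin_cases i <;> fin_cases j <;>
  · simp
    try field_simp
    try ring

lemma L15k4 (a : ℝ) (ha : a ≠ 0) (x : ℝ) :
    mA5 x * mA1 a x
    = !![-1*(a:ℂ)*(x:ℂ), -1 + 1*(a:ℂ)^2*(x:ℂ)^2;
      -1, 1*(a:ℂ)*(x:ℂ)] := by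
  have ha' : (a : ℂ) ≠ 0 := Complex.ofReal_ne_zero.mpr ha
  simp only [md_mA1 a, md_mA1' a, md_mB1 a, md_mC1 a, md_mA5, md_mB5 a, md_mC5 a, md_const,
    mA1, mB1, mC1, mA5, mB5, mC5, Matrix.one_fin_two, add_fin_two', Matrix.mul_fin_two,
    zero_add, add_zero]
  ext i j
  fin_cases i <;> fin_cases j <;>
  · simp
    try field_simp
    try ring

lemma L15k3 (a : ℝ) (ha : a ≠ 0) (x : ℝ) :
    (md mA5 x + md mA5 x + mB5 a x) * mA1 a x + mA5 x * mB1 a x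
    = !![-4*(a:ℂ) + 2*(a:ℂ)*(x:ℂ)^2, 6*(x:ℂ) + 4*(a:ℂ)^2*(x:ℂ) + -2*(a:ℂ)^2*(x:ℂ)^3;
      2*(x:ℂ), -2*(a:ℂ)*(x:ℂ)^2] := by
  have ha' : (a : ℂ) ≠ 0 := Complex.ofReal_ne_zero.mpr ha
  simp only [md_mA1 a, md_mA1' a, md_mB1 a, md_mC1 a, md_mA5, md_mB5 a, md_mC5 a, md_const,
    mA1, mB1, mC1, mA5, mB5, mC5, Matrix.one_fin_two, add_fin_two', Matrix.mul_fin_two,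
    zero_add, add_zero]
  ext i j
  fin_cases i <;> fin_cases j <;>
  · simp
    try field_simp
    try ring

lemma L15k2 (a : ℝ) (ha : a ≠ 0) (x : ℝ) :
    (md (md mA5) x + md (mB5 a) x + md (mB5 a) x + mC5 a x) * mA1 a x
      + (md mA5 x + mB5 a x) * mB1 a x + mA5 x * mC1 a x
    = !![4/(a:ℂ)*(x:ℂ) + 10*(a:ℂ)*(x:ℂ), 8/(a:ℂ)^2 + 8 + -12*(x:ℂ)^2 + -10*(a:ℂ)^2*(x:ℂ)^2;
      8/(a:ℂ)^2 + 4, -4/(a:ℂ)*(x:ℂ) + -4*(a:ℂ)*(x:ℂ)] := by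
  have ha' : (a : ℂ) ≠ 0 := Complex.ofReal_ne_zero.mpr ha
  simp only [md_mA1 a, md_mA1' a, md_mB1 a, md_mC1 a, md_mA5, md_mB5 a, md_mC5 a, md_const,
    mA1, mB1, mC1, mA5, mB5, mC5, Matrix.one_fin_two, add_fin_two', Matrix.mul_fin_two,
    zero_add, add_zero]
  ext i j
  fin_cases i <;> fin_cases j <;>
  · simp
    try field_simp
    try ring

lemma L15k1 (a : ℝ) (ha : a ≠ 0) (x : ℝ) :
    (md (md (mB5 a)) x + md (mC5 a) x + md (mC5 a) x) * mA1 a x + (md (mB5 a) x + mC5 a x) * mB1 a x + mB5 a x * mC1 a x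
    = !![16/(a:ℂ) + 8*(a:ℂ), -24/(a:ℂ)^2*(x:ℂ) + -28*(x:ℂ) + -8*(a:ℂ)^2*(x:ℂ);
      -8/(a:ℂ)^2*(x:ℂ), 0] := by
  have ha' : (a : ℂ) ≠ 0 := Complex.ofReal_ne_zero.mpr ha
  simp only [md_mA1 a, md_mA1' a, md_mB1 a, md_mC1 a, md_mA5, md_mB5 a, md_mC5 a, md_const,
    mA1, mB1, mC1, mA5, mB5, mC5, Matrix.one_fin_two, add_fin_two', Matrix.mul_fin_two,
    zero_add, add_zero]
  ext i j
  fin_cases i <;> fin_cases j <;>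
  · simp
    try field_simp
    try ring

lemma L15k0 (a : ℝ) (ha : a ≠ 0) (x : ℝ) :
    md (md (mC5 a)) x * mA1 a x + md (mC5 a) x * mB1 a x + mC5 a x * mC1 a x
    = !![0, -16/(a:ℂ)^4 + -16/(a:ℂ)^2 + -4;
      -16/(a:ℂ)^4, 0] := by
  have ha' : (a : ℂ) ≠ 0 := Complex.ofReal_ne_zero.mpr ha
  simp only [md_mA1 a, md_mA1' a, md_mB1 a, md_mC1 a, md_mA5, md_mB5 a, md_mC5 a, md_const,
    mA1, mB1, mC1, mA5, mB5, mC5, Matrix.one_fin_two, add_fin_two', Matrix.mul_fin_two,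
    zero_add, add_zero]
  ext i j
  fin_cases i <;> fin_cases j <;>
  · simp
    try field_simp
    try ring

set_option maxHeartbeats 4000000 in
/-- `D₃ := (1/4)(D₅² - D₁²) - (1/2)D₅`, `D₂ := -D₃ - D₅` and
`D₄ := (i/2)(D₁D₅ - D₅D₁)` are all second-order differential operators, and
`D₄ = ∂²i[[-ax, a²x²+1],[-1, ax]] + ∂i[[-2a-4/a, 2a²x+4x],[0, 4/a]]
  + i[[0, 2+4/a²],[-4/a², 0]]`. -/
theorem stmt15 (a : ℝ) (ha : a ≠ 0) :
    (∃ G₂ G₁ G₀ : ℝ → Matrix (Fin 2) (Fin 2) ℂ, ∀ P, Sm P → ∀ x : ℝ,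
      (1/4 : ℂ) • (actD5 a (actD5 a P) x - actD1 a (actD1 a P) x) - (1/2 : ℂ) • actD5 a P x =
        md (md P) x * G₂ x + md P x * G₁ x + P x * G₀ x) ∧
    (∃ H₂ H₁ H₀ : ℝ → Matrix (Fin 2) (Fin 2) ℂ, ∀ P, Sm P → ∀ x : ℝ,
      -((1/4 : ℂ) • (actD5 a (actD5 a P) x - actD1 a (actD1 a P) x) -
          (1/2 : ℂ) • actD5 a P x) - actD5 a P x =
        md (md P) x * H₂ x + md P x * H₁ x + P x * H₀ x) ∧
    (∀ P, Sm P → ∀ x : ℝ,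
      (Complex.I/2) • (actD5 a (actD1 a P) x - actD1 a (actD5 a P) x) =
        md (md P) x * (Complex.I • !![-(a : ℂ) * x, (a : ℂ)^2 * x^2 + 1; -1, (a : ℂ) * x]) +
        md P x * (Complex.I •
          !![-2 * (a : ℂ) - 4/(a : ℂ), 2 * (a : ℂ)^2 * x + 4 * x; 0, 4/(a : ℂ)]) +
        P x * (Complex.I • !![0, 2 + 4/(a : ℂ)^2; -4/(a : ℂ)^2, 0])) := by

  refine ⟨⟨fun x => !![0, -(a : ℂ)*x; 0, -1],
          fun x => !![2*(x : ℂ), -2/(a : ℂ) - 2*(a : ℂ); 2/(a : ℂ), 0],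
          fun _ => !![4/(a : ℂ)^2 + 2, 0; 0, 0], ?_⟩,
         ⟨fun x => !![-1, (a : ℂ)*x; 0, 0],
          fun x => !![0, 2/(a : ℂ); -2/(a : ℂ), 2*(x : ℂ)],
          fun _ => !![0, 0; 0, 4/(a : ℂ)^2], ?_⟩, ?_⟩
  · intro P hP x
    simp only [actD5_eq a, actD1_eq a]
    rw [comp_expand sm_mA5 (sm_mB5 a) (sm_mC5 a) hP x,
        comp_expand (sm_mA1 a) (sm_mB1 a) (sm_mC1 a) hP x,
        L55k4 a ha x, L55k3 a ha x, L55k2 a ha x, L55k1 a ha x, L55k0 a ha x,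
        L11k4 a ha x, L11k3 a ha x, L11k2 a ha x, L11k1 a ha x, L11k0 a ha x]
    simp only [mA5, mB5, mC5, Matrix.mul_one]
    ext i j
    fin_cases i <;> fin_cases j <;>
    · simp [Matrix.mul_apply, Fin.sum_univ_two, Matrix.smul_apply, Matrix.add_apply,
        Matrix.sub_apply, smul_eq_mul]
      ring
  · intro P hP x
    simp only [actD5_eq a, actD1_eq a]
    rw [comp_expand sm_mA5 (sm_mB5 a) (sm_mC5 a) hP x,
        comp_expand (sm_mA1 a) (sm_mB1 a) (sm_mC1 a) hP x,
        L55k4 a ha x, L55k3 a ha x, L55k2 a ha x, L55k1 a ha x, L55k0 a ha x,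
        L11k4 a ha x, L11k3 a ha x, L11k2 a ha x, L11k1 a ha x, L11k0 a ha x]
    simp only [mA5, mB5, mC5, Matrix.mul_one]
    ext i j
    fin_cases i <;> fin_cases j <;>
    · simp [Matrix.mul_apply, Fin.sum_univ_two, Matrix.smul_apply, Matrix.add_apply,
        Matrix.sub_apply, smul_eq_mul]
      ring
  · intro P hP x
    simp only [actD5_eq a, actD1_eq a]
    rw [comp_expand (sm_mA1 a) (sm_mB1 a) (sm_mC1 a) hP x,
        comp_expand sm_mA5 (sm_mB5 a) (sm_mC5 a) hP x,
        L51k4 a ha x, L51k3 a ha x, L51k2 a ha x, L51k1 a ha x, L51k0 a ha x,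
        L15k4 a ha x, L15k3 a ha x, L15k2 a ha x, L15k1 a ha x, L15k0 a ha x]
    ext i j
    fin_cases i <;> fin_cases j <;>
    · simp [Matrix.mul_apply, Fin.sum_univ_two, Matrix.smul_apply, Matrix.add_apply,
        Matrix.sub_apply, smul_eq_mul]
      ring
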